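/- arXiv:2307.10962 — 2 statements merged into one kernel-verified Lean document; each statement's English description precedes it below -/
import Mathlib

section
/- The surface S₄ = {(x,y,z) ∈ ℂ³ : x² + y² + z² + xyz = 4} has exactly four singular points, namely (-2,-2,-2), (-2,2,2), (2,-2,2), and (2,2,-2). -/
/-!
Multiplying the three gradient equations `2x + yz = 0`, `2y + xz = 0`, `2z + xy = 0` by `x`, `y`, `z`
gives `2x² = 2y² = 2z² = -xyz`. Substituting into the surface equation yields `xyz = -8`, hence
`x² = y² = z² = 4`, so every coordinate is `±2`, and the sign condition `xyz = -8` leaves exactly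
the four points with an odd number of negative coordinates.
-/

namespace CayleyCubic

variable {R : Type*} [CommRing R] [IsDomain R] {x y z : R}

theorem sq_eq_four_of_singular (h2 : (2 : R) ≠ 0)
    (hS : x ^ 2 + y ^ 2 + z ^ 2 + x * y * z = 4)
    (hx : 2 * x + y * z = 0) (hy : 2 * y + x * z = 0) (hz : 2 * z + x * y = 0) :
    x ^ 2 = 4 ∧ y ^ 2 = 4 ∧ z ^ 2 = 4 ∧ x * y * z = -8 := by
  have hxyz : x * y * z = -8 := by
    linear_combination x * hx + y * hy + z * hz - 2 * hS
  refine ⟨mul_left_cancel₀ h2 ?_, mul_left_cancel₀ h2 ?_, mul_left_cancel₀ h2 ?_, hxyz⟩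
  · linear_combination x * hx - hxyz
  · linear_combination y * hy - hxyz
  · linear_combination z * hz - hxyz

theorem eq_two_or_eq_neg_two_of_sq_eq_four (h : x ^ 2 = 4) : x = 2 ∨ x = -2 :=
  sq_eq_sq_iff_eq_or_eq_neg.mp (by linear_combination h)

theorem singular_iff (h2 : (2 : R) ≠ 0) :
    (x ^ 2 + y ^ 2 + z ^ 2 + x * y * z = 4 ∧
      2 * x + y * z = 0 ∧ 2 * y + x * z = 0 ∧ 2 * z + x * y = 0) ↔
    (x = -2 ∧ y = -2 ∧ z = -2) ∨ (x = -2 ∧ y = 2 ∧ z = 2) ∨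
      (x = 2 ∧ y = -2 ∧ z = 2) ∨ (x = 2 ∧ y = 2 ∧ z = -2) := by
  constructor
  · rintro ⟨hS, hx, hy, hz⟩
    obtain ⟨hx4, hy4, hz4, hxyz⟩ := sq_eq_four_of_singular h2 hS hx hy hz
    have h16 : (16 : R) ≠ 0 := by
      simpa only [show (16 : R) = 2 ^ 4 by norm_num] using pow_ne_zero 4 h2
    -- a sign pattern with an even number of minus signs gives `8 = -8`
    rcases eq_two_or_eq_neg_two_of_sq_eq_four hx4 with rfl | rfl <;>
      rcases eq_two_or_eq_neg_two_of_sq_eq_four hy4 with rfl | rfl <;>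
      rcases eq_two_or_eq_neg_two_of_sq_eq_four hz4 with rfl | rfl <;>
      first
        | exact absurd (by linear_combination hxyz) h16
        | simp only [and_self, true_or, or_true]
  · rintro (⟨rfl, rfl, rfl⟩ | ⟨rfl, rfl, rfl⟩ | ⟨rfl, rfl, rfl⟩ | ⟨rfl, rfl, rfl⟩) <;>
      refine ⟨?_, ?_, ?_, ?_⟩ <;> ring

end CayleyCubic

/-- The Cayley cubic `S₄` has exactly four singular points. -/
theorem singular_points_S4 :
    {p : ℂ × ℂ × ℂ |
      p.1 ^ 2 + p.2.1 ^ 2 + p.2.2 ^ 2 + p.1 * p.2.1 * p.2.2 = 4 ∧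
      2 * p.1 + p.2.1 * p.2.2 = 0 ∧
      2 * p.2.1 + p.1 * p.2.2 = 0 ∧
      2 * p.2.2 + p.1 * p.2.1 = 0} =
    {((-2 : ℂ), (-2 : ℂ), (-2 : ℂ)), ((-2 : ℂ), (2 : ℂ), (2 : ℂ)),
      ((2 : ℂ), (-2 : ℂ), (2 : ℂ)), ((2 : ℂ), (2 : ℂ), (-2 : ℂ))} := by
  ext ⟨x, y, z⟩
  simpa only [Set.mem_ofPred_eq, Set.mem_insert_iff, Set.mem_singleton_iff, Prod.mk.injEq]
    using CayleyCubic.singular_iff two_ne_zero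
end

section
/- Suppose x, y, z, x', y', z', x'', y'', z'' ∈ ℂ satisfy (x',y',z') = (-x-yz, y, z), (x'',y'',z'') = (x', -y'-x'z', z'), |x'| > 11/4, |y'| > 11/4, |z'| > 11/4, |x| ≤ |x'|, and |y''| < |y'|. Then a contradiction follows; equivalently, under the first three conditions and |x| ≤ |x'| one must have |y''| ≥ |y'|. -/
/-- If `(x',y',z') = s_x(x,y,z)`, `(x'',y'',z'') = s_y(x',y',z')`,
all of `|x'|, |y'|, |z'| > 11/4`, and `|x| ≤ |x'|`, then `|y''| ≥ |y'|`. -/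
theorem no_decrease (x y z x' y' z' x'' y'' z'' : ℂ)
    (h1 : (x', y', z') = ((-x - y * z, y, z) : ℂ × ℂ × ℂ))
    (h2 : (x'', y'', z'') = ((x', -y' - x' * z', z') : ℂ × ℂ × ℂ))
    (hx' : ‖x'‖ > 11 / 4)
    (hy' : ‖y'‖ > 11 / 4)
    (hz' : ‖z'‖ > 11 / 4)
    (hxx : ‖x‖ ≤ ‖x'‖) :
    ‖y''‖ ≥ ‖y'‖ := by
  obtain ⟨e1, e2, e3⟩ : x' = -x - y * z ∧ y' = y ∧ z' = z := by
    simpa [Prod.ext_iff] using h1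
  obtain ⟨f1, f2, f3⟩ : x'' = x' ∧ y'' = -y' - x' * z' ∧ z'' = z' := by
    simpa [Prod.ext_iff] using h2
  by_contra h
  push_neg at h
  have key1 : ‖y' * z'‖ ≤ 2 * ‖x'‖ := by
    have hq : y' * z' = -(x' + x) := by rw [e1, e2, e3]; ring
    rw [hq, norm_neg]
    calc ‖x' + x‖ ≤ ‖x'‖ + ‖x‖ := norm_add_le _ _
      _ ≤ 2 * ‖x'‖ := by linarith
  have key2 : ‖x' * z'‖ < 2 * ‖y'‖ := by
    have hq : x' * z' = -(y'' + y') := by rw [f2]; ring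
    rw [hq, norm_neg]
    calc ‖y'' + y'‖ ≤ ‖y''‖ + ‖y'‖ := norm_add_le _ _
      _ < 2 * ‖y'‖ := by linarith
  rw [norm_mul] at key1 key2
  nlinarith [norm_nonneg x', norm_nonneg y', norm_nonneg z']
end
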